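/- Anti-monotonicity of minimum-image-based support: if Q' is a sub-pattern of Q (i.e., Q' is an induced restriction of Q to a subset of its nodes and a subset of its edges), then for every graph G, Sup(Q',G) ≥ Sup(Q,G). -/

import Mathlib

structure LGraph (V : Type) (L : Type) where
  adj : V → V → Prop
  label : V → L

/-- A match (label-preserving subgraph isomorphism) of pattern `Q` into graph `G`. -/
def IsMatch {P V L : Type} (Q : LGraph P L) (G : LGraph V L) (ρ : P → V) : Prop :=
  Function.Injective ρ ∧ (∀ u, G.label (ρ u) = Q.label u) ∧
    ∀ u u', Q.adj u u' → G.adj (ρ u) (ρ u')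

/-- The image of a pattern node `u`: all vertices of `G` appearing as `ρ u` for some match. -/
def Img {P V L : Type} (Q : LGraph P L) (G : LGraph V L) (u : P) : Set V :=
  {v | ∃ ρ, IsMatch Q G ρ ∧ ρ u = v}

/-- Minimum-image-based support: the minimum over pattern nodes of `|Img u|`. -/
noncomputable def Supp {P V L : Type} [Fintype P] [Nonempty P]
    (Q : LGraph P L) (G : LGraph V L) : ℕ :=
  Finset.univ.inf' Finset.univ_nonempty (fun u => (Img Q G u).ncard)

section

variable {P P' V L : Type} {Q : LGraph P L} {Q' : LGraph P' L} {G : LGraph V L}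

theorem IsMatch.comp {ρ : P → V} {σ : P' → P} (hρ : IsMatch Q G ρ) (hσ : IsMatch Q' Q σ) :
    IsMatch Q' G (ρ ∘ σ) :=
  ⟨hρ.1.comp hσ.1, fun u => (hρ.2.1 (σ u)).trans (hσ.2.1 u),
    fun u u' huu' => hρ.2.2 _ _ (hσ.2.2 u u' huu')⟩

theorem Img_subset_Img_of_isMatch {σ : P' → P} (hσ : IsMatch Q' Q σ) (u : P') :
    Img Q G (σ u) ⊆ Img Q' G u := by
  rintro v ⟨ρ, hρ, rfl⟩
  exact ⟨ρ ∘ σ, hρ.comp hσ, rfl⟩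

theorem Supp_le_ncard_Img [Fintype P] [Nonempty P] (u : P) :
    Supp Q G ≤ (Img Q G u).ncard :=
  Finset.inf'_le _ (Finset.mem_univ u)

theorem Supp_le_Supp_of_isMatch [Fintype P] [Nonempty P] [Fintype P'] [Nonempty P'] [Finite V]
    {σ : P' → P} (hσ : IsMatch Q' Q σ) :
    Supp Q G ≤ Supp Q' G :=
  Finset.le_inf' _ _ fun u _ =>
    (Supp_le_ncard_Img (σ u)).trans
      (Set.ncard_le_ncard (Img_subset_Img_of_isMatch hσ u) (Set.toFinite _))

end

/-- Anti-monotonicity of minimum-image-based support: if `Q'` is a sub-pattern of `Q`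
(witnessed by an injection `ι` of node sets preserving labels and edges), then
for every finite graph `G`, `Sup(Q',G) ≥ Sup(Q,G)`. -/
theorem supp_antimono {P P' V L : Type} [Fintype P] [Nonempty P] [Fintype P'] [Nonempty P']
    [Fintype V]
    (Q : LGraph P L) (Q' : LGraph P' L) (G : LGraph V L) (ι : P' → P)
    (hinj : Function.Injective ι)
    (hlab : ∀ u, Q'.label u = Q.label (ι u))
    (hadj : ∀ u u', Q'.adj u u' → Q.adj (ι u) (ι u')) :
    Supp Q G ≤ Supp Q' G :=
  Supp_le_Supp_of_isMatch ⟨hinj, fun u => (hlab u).symm, hadj⟩
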